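/- arXiv:2503.05510 — 2 statements merged into one kernel-verified Lean document; each statement's English description precedes it below -/
import Mathlib

section
/- For any α with -1 < α ≤ 1 and any reals x₁, x₂: the R-conjunction Rα∧(x₁,x₂) = (1/(1+α))(x₁ + x₂ - √(x₁² + x₂² - 2αx₁x₂)) is nonnegative if and only if x₁ ≥ 0 and x₂ ≥ 0. -/
/-! Since `(x₁ + x₂)² - (x₁² + x₂² - 2αx₁x₂) = 2(1 + α)x₁x₂`, for `α > -1` the square root is at most
`x₁ + x₂` exactly when `x₁ + x₂ ≥ 0` and `x₁x₂ ≥ 0`, i.e. when both arguments are nonnegative. -/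

theorem nonneg_and_nonneg_iff_add_nonneg_and_mul_nonneg {R : Type*} [Ring R] [LinearOrder R]
    [IsStrictOrderedRing R] {a b : R} : 0 ≤ a + b ∧ 0 ≤ a * b ↔ 0 ≤ a ∧ 0 ≤ b := by
  constructor
  · rintro ⟨hsum, hprod⟩
    rcases mul_nonneg_iff.mp hprod with hab | ⟨ha, hb⟩
    · exact hab
    · exact ⟨by simpa using hsum.trans (add_le_add_right hb a),
        by simpa using hsum.trans (add_le_add_left ha b)⟩
  · rintro ⟨ha, hb⟩
    exact ⟨add_nonneg ha hb, mul_nonneg ha hb⟩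

theorem sqrt_le_add_iff_nonneg_and_nonneg {α x₁ x₂ : ℝ} (hα : -1 < α) :
    Real.sqrt (x₁ ^ 2 + x₂ ^ 2 - 2 * α * x₁ * x₂) ≤ x₁ + x₂ ↔ 0 ≤ x₁ ∧ 0 ≤ x₂ := by
  have hgap : (x₁ + x₂) ^ 2 - (x₁ ^ 2 + x₂ ^ 2 - 2 * α * x₁ * x₂) = 2 * (1 + α) * (x₁ * x₂) := by
    ring
  have hprod : x₁ ^ 2 + x₂ ^ 2 - 2 * α * x₁ * x₂ ≤ (x₁ + x₂) ^ 2 ↔ 0 ≤ x₁ * x₂ := by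
    rw [← sub_nonneg, hgap, mul_nonneg_iff_of_pos_left (by linarith)]
  rw [Real.sqrt_le_iff, hprod]
  exact nonneg_and_nonneg_iff_add_nonneg_and_mul_nonneg

theorem r_alpha_conjunction_nonneg_iff_general (α x₁ x₂ : ℝ) (hα₁ : -1 < α) :
    0 ≤ (1 / (1 + α)) * (x₁ + x₂ - Real.sqrt (x₁ ^ 2 + x₂ ^ 2 - 2 * α * x₁ * x₂)) ↔
      0 ≤ x₁ ∧ 0 ≤ x₂ := by
  have hscale : 0 < 1 / (1 + α) := one_div_pos.mpr (by linarith)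
  rw [mul_nonneg_iff_of_pos_left hscale, sub_nonneg]
  exact sqrt_le_add_iff_nonneg_and_nonneg hα₁

theorem r_alpha_conjunction_nonneg_iff (α x₁ x₂ : ℝ) (hα₁ : -1 < α) (hα₂ : α ≤ 1) :
    0 ≤ (1 / (1 + α)) * (x₁ + x₂ - Real.sqrt (x₁ ^ 2 + x₂ ^ 2 - 2 * α * x₁ * x₂)) ↔
      0 ≤ x₁ ∧ 0 ≤ x₂ :=
  r_alpha_conjunction_nonneg_iff_general α x₁ x₂ hα₁
end

section
/- For any α with -1 < α ≤ 1 and any reals x₁, x₂: the R-disjunction Rα∨(x₁,x₂) = (1/(1+α))(x₁ + x₂ + √(x₁² + x₂² - 2αx₁x₂)) is nonnegative if and only if x₁ ≥ 0 or x₂ ≥ 0. -/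
theorem r_alpha_disjunction_nonneg_iff (α x₁ x₂ : ℝ) (hα₁ : -1 < α) (hα₂ : α ≤ 1) :
    0 ≤ (1 / (1 + α)) * (x₁ + x₂ + Real.sqrt (x₁ ^ 2 + x₂ ^ 2 - 2 * α * x₁ * x₂)) ↔
      0 ≤ x₁ ∨ 0 ≤ x₂ := by
  have h1α : (0:ℝ) < 1 + α := by linarith
  have hinv : (0:ℝ) < 1 / (1 + α) := by positivity
  have hrad : 0 ≤ x₁ ^ 2 + x₂ ^ 2 - 2 * α * x₁ * x₂ := by
    nlinarith [sq_nonneg (x₁ + x₂), sq_nonneg (x₁ - x₂)]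
  set r := Real.sqrt (x₁ ^ 2 + x₂ ^ 2 - 2 * α * x₁ * x₂) with hrdef
  have hr : 0 ≤ r := Real.sqrt_nonneg _
  have hr2 : r ^ 2 = x₁ ^ 2 + x₂ ^ 2 - 2 * α * x₁ * x₂ := Real.sq_sqrt hrad
  constructor
  · intro h
    by_contra hc
    push_neg at hc
    obtain ⟨h1, h2⟩ := hc
    have hx : 0 < x₁ * x₂ := mul_pos_of_neg_of_neg h1 h2
    have hlt : x₁ + x₂ + r < 0 := by nlinarith [sq_nonneg (r + x₁ + x₂)]
    nlinarith [mul_pos hinv (by linarith : 0 < -(x₁ + x₂ + r))]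
  · intro h
    apply mul_nonneg (le_of_lt hinv)
    rcases le_or_gt 0 (x₁ + x₂) with hs | hs
    · linarith
    · rcases h with h | h
      · have h2 : x₂ < 0 := by linarith
        have hx : x₁ * x₂ ≤ 0 := mul_nonpos_of_nonneg_of_nonpos h (le_of_lt h2)
        nlinarith [sq_nonneg (r + x₁ + x₂)]
      · have h1 : x₁ < 0 := by linarith
        have hx : x₁ * x₂ ≤ 0 := mul_nonpos_of_nonpos_of_nonneg (le_of_lt h1) h
        nlinarith [sq_nonneg (r + x₁ + x₂)]
end
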